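/- arXiv:2306.15284 — 3 statements merged into one kernel-verified Lean document; each statement's English description precedes it below -/
import Mathlib

section
/- Let μ be the additive arithmetic function with μ(p^n) = log p + log n for prime powers. Then for all positive integers m, n (not necessarily coprime), max(μ(m), μ(n)) ≤ μ(mn) ≤ μ(m) + μ(n). -/
/-!
Both sides are sums over primes: `μ k = ∑ₚ w p (vₚ k)` with `w p 0 = 0` and
`w p a = log p + log a` for `a > 0`, and `vₚ (m * n) = vₚ m + vₚ n`. So it suffices that
`a ↦ w p a` is monotone and subadditive. Subadditivity for `a, b > 0` is
`a + b ≤ p * a * b`, which holds since `p ≥ 2`.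
-/

open Finset Real

theorem Nat.additive_factorization {β : Type*} [AddCommMonoid β] (f : ℕ → β)
    (h_add : ∀ x y : ℕ, 0 < x → 0 < y → Nat.Coprime x y → f (x * y) = f x + f y)
    (hf : f 1 = 0) : ∀ {n : ℕ}, n ≠ 0 → f n = n.factorization.sum fun p k => f (p ^ k) := by
  apply Nat.recOnPosPrimePosCoprime
  · rintro p k hp - -
    simp [hp.factorization_pow, Finsupp.sum_single_index, hf]
  · simp
  · rintro -
    simp [hf]
  · intro a b ha hb hab iha ihb _
    rw [h_add a b (by omega) (by omega) hab, iha (by omega), ihb (by omega),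
      Nat.factorization_mul_of_coprime hab,
      ← Finsupp.sum_add_index_of_disjoint hab.disjoint_primeFactors]

noncomputable def primePowerWeight (p a : ℕ) : ℝ :=
  if a = 0 then 0 else log p + log a

theorem primePowerWeight_monotone (p : ℕ) : Monotone (primePowerWeight p) := by
  intro a b hab
  unfold primePowerWeight
  have hp : 0 ≤ log p := log_natCast_nonneg p
  split_ifs with ha hb hb
  · rfl
  · linarith [log_natCast_nonneg b]
  · omega
  · gcongr

theorem primePowerWeight_add_le {p : ℕ} (hp : 2 ≤ p) (a b : ℕ) :
    primePowerWeight p (a + b) ≤ primePowerWeight p a + primePowerWeight p b := by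
  rcases Nat.eq_zero_or_pos a with rfl | ha
  · simp [primePowerWeight]
  rcases Nat.eq_zero_or_pos b with rfl | hb
  · simp [primePowerWeight]
  have hab : a + b ≤ p * (a * b) :=
    calc a + b ≤ a * b + a * b :=
          add_le_add (Nat.le_mul_of_pos_right a hb) (Nat.le_mul_of_pos_left b ha)
      _ = 2 * (a * b) := (two_mul _).symm
      _ ≤ p * (a * b) := Nat.mul_le_mul_right _ hp
  have hlog : log ((a + b : ℕ) : ℝ) ≤ log p + (log a + log b) := by
    rw [← log_mul (by positivity) (by positivity), ← log_mul (by positivity)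
      (by positivity)]
    exact log_le_log (by positivity) (by exact_mod_cast hab)
  simp only [primePowerWeight, ha.ne', hb.ne', Nat.add_eq_zero_iff, and_self, if_false]
  linarith [log_natCast_nonneg p]

theorem eq_sum_primePowerWeight (μ : ℕ → ℝ)
    (hμp : ∀ p n : ℕ, p.Prime → 0 < n → μ (p ^ n) = log p + log n)
    (hμmul : ∀ m n : ℕ, 0 < m → 0 < n → Nat.Coprime m n → μ (m * n) = μ m + μ n)
    {k : ℕ} (hk : k ≠ 0) {s : Finset ℕ} (hs : k.primeFactors ⊆ s) :
    μ k = ∑ p ∈ s, primePowerWeight p (k.factorization p) := by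
  have hμ1 : μ 1 = 0 := by simpa using hμmul 1 1 one_pos one_pos (Nat.coprime_one_left 1)
  have hμ_pow : ∀ p, p.Prime → ∀ a, μ (p ^ a) = primePowerWeight p a := by
    intro p hp a
    rcases Nat.eq_zero_or_pos a with rfl | ha
    · simp [primePowerWeight, hμ1]
    · simp [primePowerWeight, hμp p a hp ha, ha.ne']
  rw [Nat.additive_factorization μ hμmul hμ1 hk,
    Finsupp.sum_congr fun p hp => hμ_pow p (Nat.prime_of_mem_primeFactors hp) _]
  exact Finsupp.sum_of_support_subset _ hs _ fun p _ => if_pos rfl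

theorem stmt_3 (μ : ℕ → ℝ)
    (hμp : ∀ p n : ℕ, p.Prime → 0 < n → μ (p ^ n) = Real.log p + Real.log n)
    (hμmul : ∀ m n : ℕ, 0 < m → 0 < n → Nat.Coprime m n → μ (m * n) = μ m + μ n)
    (m n : ℕ) (hm : 0 < m) (hn : 0 < n) :
    max (μ m) (μ n) ≤ μ (m * n) ∧ μ (m * n) ≤ μ m + μ n := by
  have hmn : m * n ≠ 0 := by positivity
  have hμ_sum : ∀ k, k ∣ m * n → μ k = ∑ p ∈ (m * n).primeFactors,
      primePowerWeight p (k.factorization p) := fun k hk =>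
    eq_sum_primePowerWeight μ hμp hμmul (ne_zero_of_dvd_ne_zero hmn hk)
      (Nat.primeFactors_mono hk hmn)
  rw [hμ_sum m (dvd_mul_right m n), hμ_sum n (dvd_mul_left n m), hμ_sum _ dvd_rfl,
    Nat.factorization_mul hm.ne' hn.ne']
  simp only [Finsupp.add_apply]
  refine ⟨max_le ?_ ?_, ?_⟩
  · exact sum_le_sum fun p _ => primePowerWeight_monotone p (Nat.le_add_right _ _)
  · exact sum_le_sum fun p _ => primePowerWeight_monotone p (Nat.le_add_left _ _)
  · rw [← sum_add_distrib]
    exact sum_le_sum fun p hp =>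
      primePowerWeight_add_le (Nat.prime_of_mem_primeFactors hp).two_le _ _
end

section
/- Let T be the Collatz map T(n) = (3n+1)/2 for odd n and T(n) = n/2 for even n. Let j ≥ 2, 0 ≤ k ≤ j−1, and suppose n ≡ −1 − (2/3)^k (mod 2^j), meaning 3^k(n+1) + 2^k ≡ 0 (mod 2^j). Then for 0 ≤ i < j, T^i(n) is even if and only if i = k. -/
/-!
Writing `n + 1 ≡ -(2/3)^k (mod 2^j)`, an odd step `x ↦ (3x+1)/2` multiplies `x + 1` by `3/2`.
So the first `k` iterates are odd and move the residue to `T^[k] n + 1 ≡ -1 (mod 2^(j-k))`: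
`T^[k] n` is even, and halving it leaves `T^[k+1] n ≡ -1 (mod 2^(j-k-1))`, which forces the
next `j - k - 1` iterates to be odd again.
-/

/-- The shortcut Collatz map. -/
def T (n : ℕ) : ℕ := if n % 2 = 1 then (3 * n + 1) / 2 else n / 2

theorem two_mul_T_add_one_of_odd {x : ℕ} (h : x % 2 = 1) : 2 * (T x + 1) = 3 * (x + 1) := by
  simp only [T, h, if_true]
  omega

theorem two_mul_T_of_even {x : ℕ} (h : x % 2 = 0) : 2 * T x = x := by
  simp only [T, h, zero_ne_one, if_false]
  omega

theorem iterate_T_odd_of_two_pow_dvd_add_one {m x : ℕ} (h : 2 ^ m ∣ x + 1) :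
    ∀ i < m, T^[i] x % 2 = 1 := by
  induction m generalizing x with
  | zero => simp
  | succ m ih =>
    have hodd : x % 2 = 1 := by
      have : 2 ∣ x + 1 := (dvd_pow_self 2 m.succ_ne_zero).trans h
      omega
    have hT : 2 ^ m ∣ T x + 1 := by
      refine Nat.dvd_of_mul_dvd_mul_left two_pos ?_
      rw [← pow_succ', two_mul_T_add_one_of_odd hodd]
      exact h.mul_left 3
    rintro (_ | i) hi
    · exact hodd
    · exact ih hT i (by omega)

theorem iterate_T_odd_of_two_pow_dvd {a m x : ℕ} (h : 2 ^ (a + m) ∣ 3 ^ a * (x + 1) + 2 ^ a) :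
    (∀ i < a, T^[i] x % 2 = 1) ∧ 2 ^ m ∣ T^[a] x + 2 := by
  induction a generalizing x with
  | zero => simpa [add_assoc] using h
  | succ a ih =>
    have hodd : x % 2 = 1 := by
      have h2 : 2 ∣ 3 ^ (a + 1) * (x + 1) :=
        (Nat.dvd_add_left (dvd_pow_self 2 a.succ_ne_zero)).mp
          ((dvd_pow_self 2 (by omega)).trans h)
      rcases Nat.prime_two.dvd_mul.mp h2 with h3 | h1
      · exact absurd (Nat.prime_two.dvd_of_dvd_pow h3) (by norm_num)
      · omega
    have hstep : 3 ^ (a + 1) * (x + 1) + 2 ^ (a + 1) = 2 * (3 ^ a * (T x + 1) + 2 ^ a) :=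
      calc 3 ^ (a + 1) * (x + 1) + 2 ^ (a + 1) = 3 ^ a * (3 * (x + 1)) + 2 * 2 ^ a := by ring
        _ = 2 * (3 ^ a * (T x + 1) + 2 ^ a) := by rw [← two_mul_T_add_one_of_odd hodd]; ring
    rw [hstep, show a + 1 + m = (a + m) + 1 by omega, pow_succ'] at h
    obtain ⟨hodds, hlast⟩ := ih (Nat.dvd_of_mul_dvd_mul_left two_pos h)
    refine ⟨?_, hlast⟩
    rintro (_ | i) hi
    · exact hodd
    · exact hodds i (by omega)

theorem T_even_of_two_pow_succ_dvd_add_two {m y : ℕ} (h : 2 ^ (m + 1) ∣ y + 2) :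
    y % 2 = 0 ∧ 2 ^ m ∣ T y + 1 := by
  have heven : y % 2 = 0 := by
    have : 2 ∣ y + 2 := (dvd_pow_self 2 m.succ_ne_zero).trans h
    omega
  refine ⟨heven, Nat.dvd_of_mul_dvd_mul_left two_pos ?_⟩
  rwa [← pow_succ', mul_add, two_mul_T_of_even heven]

theorem stmt_8_general (j k n : ℕ) (hk : k ≤ j - 1)
    (hcong : 3 ^ k * (n + 1) + 2 ^ k ≡ 0 [MOD 2 ^ j]) :
    ∀ i < j, (T^[i] n) % 2 = 0 ↔ i = k := by
  intro i hi
  obtain ⟨m, rfl⟩ : ∃ m, j = k + (m + 1) := ⟨j - k - 1, by omega⟩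
  obtain ⟨hbefore, hk2⟩ := iterate_T_odd_of_two_pow_dvd (Nat.modEq_zero_iff_dvd.mp hcong)
  obtain ⟨hkeven, hk1⟩ := T_even_of_two_pow_succ_dvd_add_two hk2
  have hafter := iterate_T_odd_of_two_pow_dvd_add_one hk1
  rcases lt_trichotomy i k with hik | rfl | hki
  · simp [hbefore i hik, hik.ne]
  · simp [hkeven]
  · obtain ⟨l, rfl⟩ : ∃ l, i = l + 1 + k := ⟨i - k - 1, by omega⟩
    rw [Function.iterate_add_apply, Function.iterate_succ_apply, hafter l (by omega)]
    omega

theorem stmt_8 (j k n : ℕ) (hj : 2 ≤ j) (hk : k ≤ j - 1)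
    (hcong : 3 ^ k * (n + 1) + 2 ^ k ≡ 0 [MOD 2 ^ j]) :
    ∀ i < j, (T^[i] n) % 2 = 0 ↔ i = k :=
  stmt_8_general j k n hk hcong
end

section
/- Let p₁, …, p_k be distinct Wieferich primes (primes p with p² ∣ 2^{p−1} − 1) and L = lcm(p₁−1, …, p_k−1). Then g(1, 2^L−1, 2^L) > log(p₁⋯p_k / (2^{k+1}·L)), where g(a,b,c) = log c − μ(abc). -/
/-!
For `n ≠ 0`, `log n - μ n = ∑_{q^a ∥ n} (a log q - log q - log a)`, and since `a ≤ 2^(a-1)` every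
term is nonnegative and at least `log (q / 2)` when `a ≥ 2`. As `p_i - 1 ∣ L`, each `p_i²` divides
`2^L - 1`, whence `μ (2^L - 1) < L log 2 - ∑ log (p_i / 2)`; adding `μ (2^L) = log 2 + log L`
gives the bound.
-/

open Real

lemma Real.log_natCast_le_mul_log_two {a : ℕ} (ha : 0 < a) : log a ≤ (a - 1) * log 2 := by
  have h : a ≤ 2 ^ (a - 1) := by have := Nat.lt_two_pow_self (n := a - 1); omega
  calc log a ≤ log ((2 : ℝ) ^ (a - 1)) := log_le_log (by positivity) (by exact_mod_cast h)
    _ = (a - 1) * log 2 := by rw [log_pow, Nat.cast_pred ha]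

theorem Real.log_add_log_natCast_le_mul_log {q : ℝ} (hq : 2 ≤ q) {a : ℕ} (ha : 0 < a) :
    log q + log a ≤ a * log q := by
  have := log_natCast_le_mul_log_two ha
  have : log 2 ≤ log q := log_le_log two_pos hq
  have : (0 : ℝ) ≤ a - 1 := by rw [sub_nonneg]; exact_mod_cast ha
  nlinarith

theorem Real.log_add_log_natCast_le_mul_log_sub {q : ℝ} (hq : 2 ≤ q) {a : ℕ} (ha : 2 ≤ a) :
    log q + log a ≤ a * log q - (log q - log 2) := by
  have := log_natCast_le_mul_log_two (a := a) (by omega)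
  have : log 2 ≤ log q := log_le_log two_pos hq
  have : (0 : ℝ) ≤ a - 2 := by rw [sub_nonneg]; exact_mod_cast ha
  nlinarith

section PrimePowerAdditive

variable {μ : ℕ → ℝ}
  (hμp : ∀ p n : ℕ, p.Prime → 0 < n → μ (p ^ n) = log p + log n)
  (hμmul : ∀ m n : ℕ, 0 < m → 0 < n → Nat.Coprime m n → μ (m * n) = μ m + μ n)
include hμp hμmul

theorem eq_sum_factorization_of_additive {n : ℕ} (hn : n ≠ 0) :
    μ n = n.factorization.sum fun q a => log q + log a := by
  induction n using Nat.recOnPosPrimePosCoprime with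
  | zero => exact absurd rfl hn
  | one => simpa using hμmul 1 1 one_pos one_pos (Nat.coprime_one_left 1)
  | prime_pow q a hq ha =>
    rw [hq.factorization_pow, Finsupp.sum, Finsupp.support_single _ ha.ne',
      Finset.sum_singleton, Finsupp.single_eq_same, hμp q a hq ha]
  | coprime a b _ _ hab iha ihb =>
    rw [hμmul a b (by positivity) (by positivity) hab, iha (by positivity), ihb (by positivity),
      Nat.factorization_mul_of_coprime hab,
      Finsupp.sum_add_index_of_disjoint hab.disjoint_primeFactors]

theorem le_log_sub_sum_of_sq_dvd {n : ℕ} (hn : n ≠ 0) {S : Finset ℕ}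
    (hS : ∀ q ∈ S, q.Prime ∧ q ^ 2 ∣ n) :
    μ n ≤ log n - ∑ q ∈ S, (log q - log 2) := by
  have hsub : S ⊆ n.primeFactors := fun q hq =>
    Nat.mem_primeFactors.mpr ⟨(hS q hq).1, (dvd_pow_self q two_ne_zero).trans (hS q hq).2, hn⟩
  have hdefect : log n - μ n =
      ∑ q ∈ n.primeFactors, (n.factorization q * log q - (log q + log (n.factorization q))) := by
    rw [log_nat_eq_sum_factorization, eq_sum_factorization_of_additive hμp hμmul hn, Finsupp.sum,
      Finsupp.sum, Nat.support_factorization, Finset.sum_sub_distrib]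
  have hq2 : ∀ q ∈ n.primeFactors, (2 : ℝ) ≤ q := fun q hq =>
    mod_cast (Nat.prime_of_mem_primeFactors hq).two_le
  calc μ n = log n - (log n - μ n) := by ring
    _ ≤ log n - ∑ q ∈ S, (log q - log 2) := by
      gcongr
      rw [hdefect]
      refine (Finset.sum_le_sum fun q hq => ?_).trans <|
        Finset.sum_le_sum_of_subset_of_nonneg hsub fun q hq _ => ?_
      · have := (hS q hq).1.pow_dvd_iff_le_factorization hn |>.mp (hS q hq).2
        linarith [log_add_log_natCast_le_mul_log_sub (hq2 q (hsub hq)) this]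
      · have := (Nat.prime_of_mem_primeFactors hq).factorization_pos_of_dvd hn
          (Nat.dvd_of_mem_primeFactors hq)
        linarith [log_add_log_natCast_le_mul_log (hq2 q hq) this]

end PrimePowerAdditive

theorem stmt_16_general (μ : ℕ → ℝ)
    (hμp : ∀ p n : ℕ, p.Prime → 0 < n → μ (p ^ n) = Real.log p + Real.log n)
    (hμmul : ∀ m n : ℕ, 0 < m → 0 < n → Nat.Coprime m n → μ (m * n) = μ m + μ n)
    (k : ℕ) (p : Fin k → ℕ) (hinj : Function.Injective p)
    (hW : ∀ i, (p i).Prime ∧ (p i) ^ 2 ∣ 2 ^ (p i - 1) - 1) :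
    Real.log (2 ^ (Finset.univ.lcm fun i => p i - 1)) -
        μ (1 * (2 ^ (Finset.univ.lcm fun i => p i - 1) - 1) *
            2 ^ (Finset.univ.lcm fun i => p i - 1)) >
      Real.log ((∏ i, (p i : ℝ)) /
        (2 ^ (k + 1) * (Finset.univ.lcm fun i => p i - 1 : ℕ))) := by
  set L := Finset.univ.lcm fun i => p i - 1
  have hL : 0 < L := Nat.pos_of_ne_zero <| Finset.lcm_eq_zero_iff.not.mpr <| by
    simpa using fun i => Nat.sub_ne_zero_of_lt (hW i).1.one_lt
  have hsq : ∀ i, p i ^ 2 ∣ 2 ^ L - 1 := fun i =>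
    (hW i).2.trans (Nat.pow_sub_one_dvd_pow_sub_one 2 (Finset.dvd_lcm (Finset.mem_univ i)))
  have hN : 0 < 2 ^ L - 1 := Nat.sub_pos_of_lt (Nat.one_lt_two_pow hL.ne')
  have hcop : Nat.Coprime (2 ^ L - 1) (2 ^ L) :=
    (Nat.coprime_self_sub_left Nat.one_le_two_pow).mpr (Nat.coprime_one_left _)
  have hμN := le_log_sub_sum_of_sq_dvd hμp hμmul hN.ne' (S := Finset.univ.image p)
    (by simpa using fun i => ⟨(hW i).1, hsq i⟩)
  rw [Finset.sum_image fun i _ j _ h => hinj h] at hμN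
  have hlogN : log (2 ^ L - 1 : ℕ) < L * log 2 := by
    rw [← log_pow]
    exact log_lt_log (by exact_mod_cast hN) (by push_cast [Nat.one_le_two_pow]; linarith)
  have hp : ∀ i, (0 : ℝ) < p i := fun i => mod_cast (hW i).1.pos
  rw [one_mul, hμmul _ _ hN (by positivity) hcop, hμp 2 L Nat.prime_two hL,
    log_div (Finset.prod_pos fun i _ => hp i).ne' (by positivity),
    log_mul (by positivity) (by positivity), log_prod fun i _ => (hp i).ne']
  simp only [Finset.sum_sub_distrib, Finset.sum_const, Finset.card_univ, Fintype.card_fin,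
    nsmul_eq_mul] at hμN
  push_cast [log_pow]
  linarith

theorem stmt_16 (μ : ℕ → ℝ)
    (hμp : ∀ p n : ℕ, p.Prime → 0 < n → μ (p ^ n) = Real.log p + Real.log n)
    (hμmul : ∀ m n : ℕ, 0 < m → 0 < n → Nat.Coprime m n → μ (m * n) = μ m + μ n)
    (k : ℕ) (hk : 0 < k) (p : Fin k → ℕ) (hinj : Function.Injective p)
    (hW : ∀ i, (p i).Prime ∧ (p i) ^ 2 ∣ 2 ^ (p i - 1) - 1) :
    Real.log (2 ^ (Finset.univ.lcm fun i => p i - 1)) -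
        μ (1 * (2 ^ (Finset.univ.lcm fun i => p i - 1) - 1) *
            2 ^ (Finset.univ.lcm fun i => p i - 1)) >
      Real.log ((∏ i, (p i : ℝ)) /
        (2 ^ (k + 1) * (Finset.univ.lcm fun i => p i - 1 : ℕ))) :=
  stmt_16_general μ hμp hμmul k p hinj hW
end
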